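/- Let β > 0, B > 0, k ≥ 1, T ≥ 1, and dt, τ > 0. There exists a constant C > 0, depending only on β, B, k, T and dt/τ, such that for all x ∈ ℝ^d with ‖x‖ ≤ B and all prototype tuples R = (ρ_1, …, ρ_k), R′ = (ρ′_1, …, ρ′_k) with all ‖ρ_μ‖, ‖ρ′_μ‖ ≤ B, the T-step attractor iterates x_R^T and x_{R′}^T — defined by x^0 = x and x^{t+1} = x^t + (dt/τ)·Σ_{μ=1}^k (ρ_μ − x^t)·σ_μ(x^t; R) with σ_μ(v; R) = exp(−β‖ρ_μ − v‖²)/Σ_{ν=1}^k exp(−β‖ρ_ν − v‖²), and analogously for R′ — satisfy ‖x_R^T − x_{R′}^T‖ ≤ C·Σ_{μ=1}^k ‖ρ_μ − ρ′_μ‖. -/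

import Mathlib

noncomputable def amIter {d k : ℕ} (β r : ℝ) (ρ : Fin k → EuclideanSpace ℝ (Fin d))
    (x : EuclideanSpace ℝ (Fin d)) : ℕ → EuclideanSpace ℝ (Fin d)
  | 0 => x
  | t + 1 =>
      amIter β r ρ x t +
        r • ∑ μ, (Real.exp (-β * ‖ρ μ - amIter β r ρ x t‖ ^ 2) /
            ∑ ν, Real.exp (-β * ‖ρ ν - amIter β r ρ x t‖ ^ 2)) • (ρ μ - amIter β r ρ x t)

/-!
One step of the recursion is `y ↦ y + r • m(ρ - y)`, where `m(a)` is the mean of the vectors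
`a μ` under the Gibbs weights `exp(-β‖a μ‖²)`. If all `‖a μ‖, ‖b μ‖ ≤ R` and `‖a μ - b μ‖ ≤ η`,
each unnormalised weight is at least `exp(-βR²)` and moves by at most `2βRη`, so the normalised
weights move by at most `4βRη exp(βR²)` in `ℓ¹`. Hence `m` is Lipschitz on the ball of radius `R`
with a constant depending only on `β` and `R`, not on the number of prototypes or the dimension.
The iterates stay in the ball of radius `(1 + 2r)^t B`, and the discrete Grönwall inequality turns
the resulting one-step estimate `e (t+1) ≤ (1 + c t) e t + c t ∑ μ ‖ρ μ - ρ' μ‖` into the theorem.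
-/

open Finset

lemma Real.abs_exp_sub_exp_le_of_nonpos {u v : ℝ} (hu : u ≤ 0) (hv : v ≤ 0) :
    |Real.exp u - Real.exp v| ≤ |u - v| := by
  wlog h : v ≤ u generalizing u v
  · rw [abs_sub_comm, abs_sub_comm u v]
    exact this hv hu (le_of_not_ge h)
  rw [abs_of_nonneg (sub_nonneg.2 (Real.exp_le_exp.2 h)), abs_of_nonneg (sub_nonneg.2 h)]
  have hexp : Real.exp v = Real.exp u * Real.exp (v - u) := by rw [← Real.exp_add]; ring_nf
  nlinarith [Real.add_one_le_exp (v - u), Real.exp_le_one_iff.2 hu, Real.exp_pos u]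

lemma abs_sq_norm_sub_sq_norm_le {E : Type*} [SeminormedAddCommGroup E] (a b : E) :
    |‖a‖ ^ 2 - ‖b‖ ^ 2| ≤ ‖a - b‖ * (‖a‖ + ‖b‖) := by
  rw [sq_sub_sq, abs_mul, abs_of_nonneg (by positivity : 0 ≤ ‖a‖ + ‖b‖), mul_comm]
  exact mul_le_mul_of_nonneg_right (abs_norm_sub_norm_le a b) (by positivity)

lemma sum_abs_div_sum_sub_div_sum_le {ι : Type*} [Fintype ι] [Nonempty ι] {w w' : ι → ℝ}
    {ε : ℝ} (hw : ∀ μ, 0 < w μ) (hw' : ∀ μ, 0 < w' μ) (hε : ∀ μ, |w μ - w' μ| ≤ ε * w μ) :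
    ∑ μ, |w μ / ∑ ν, w ν - w' μ / ∑ ν, w' ν| ≤ 2 * ε := by
  set S := ∑ ν, w ν
  set S' := ∑ ν, w' ν
  have hS : 0 < S := sum_pos (fun μ _ => hw μ) univ_nonempty
  have hS' : 0 < S' := sum_pos (fun μ _ => hw' μ) univ_nonempty
  have hSS' : |S - S'| ≤ ε * S := by
    calc |S - S'| = |∑ μ, (w μ - w' μ)| := by rw [sum_sub_distrib]
      _ ≤ ∑ μ, |w μ - w' μ| := abs_sum_le_sum_abs _ _
      _ ≤ ∑ μ, ε * w μ := sum_le_sum fun μ _ => hε μ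
      _ = ε * S := (mul_sum _ _ _).symm
  calc ∑ μ, |w μ / S - w' μ / S'|
      = ∑ μ, |(w μ - w' μ) / S + w' μ / S' * ((S' - S) / S)| := by
        congr 1 with μ
        congr 1
        field_simp
        ring
    _ ≤ ∑ μ, (ε * w μ / S + w' μ / S' * (ε * S / S)) := by
        refine sum_le_sum fun μ _ => (abs_add_le _ _).trans (add_le_add ?_ ?_)
        · rw [abs_div, abs_of_pos hS]
          gcongr
          exact hε μ
        · rw [abs_mul, abs_of_pos (div_pos (hw' μ) hS'), abs_div, abs_of_pos hS, abs_sub_comm]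
          gcongr
          exact (div_pos (hw' μ) hS').le
    _ = 2 * ε := by
        rw [sum_add_distrib, ← sum_div, ← mul_sum, ← sum_mul, ← sum_div]
        field_simp
        ring

lemma sum_exp_div_sum_exp {ι : Type*} [Fintype ι] [Nonempty ι] (f : ι → ℝ) :
    ∑ μ, Real.exp (f μ) / ∑ ν, Real.exp (f ν) = 1 := by
  rw [← sum_div]
  exact div_self (sum_pos (fun μ _ => Real.exp_pos _) univ_nonempty).ne'

lemma exp_div_sum_exp_nonneg {ι : Type*} [Fintype ι] (f : ι → ℝ) (μ : ι) :
    0 ≤ Real.exp (f μ) / ∑ ν, Real.exp (f ν) :=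
  div_nonneg (Real.exp_pos _).le (sum_nonneg fun _ _ => (Real.exp_pos _).le)

lemma abs_exp_neg_sq_norm_sub_le {E : Type*} [SeminormedAddCommGroup E] {β R η : ℝ} (hβ : 0 ≤ β)
    {a b : E} (ha : ‖a‖ ≤ R) (hb : ‖b‖ ≤ R) (hab : ‖a - b‖ ≤ η) :
    |Real.exp (-β * ‖a‖ ^ 2) - Real.exp (-β * ‖b‖ ^ 2)| ≤
      2 * β * R * η * Real.exp (β * R ^ 2) * Real.exp (-β * ‖a‖ ^ 2) := by
  have hR : 0 ≤ R := (norm_nonneg _).trans ha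
  have hη : 0 ≤ η := (norm_nonneg _).trans hab
  have hlower : 1 ≤ Real.exp (β * R ^ 2) * Real.exp (-β * ‖a‖ ^ 2) := by
    rw [← Real.exp_add, Real.one_le_exp_iff]
    nlinarith [pow_le_pow_left₀ (norm_nonneg _) ha 2]
  calc |Real.exp (-β * ‖a‖ ^ 2) - Real.exp (-β * ‖b‖ ^ 2)|
      ≤ |-β * ‖a‖ ^ 2 - -β * ‖b‖ ^ 2| :=
        Real.abs_exp_sub_exp_le_of_nonpos (by nlinarith [sq_nonneg ‖a‖]) (by nlinarith [sq_nonneg ‖b‖])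
    _ = β * |‖a‖ ^ 2 - ‖b‖ ^ 2| := by
        rw [show -β * ‖a‖ ^ 2 - -β * ‖b‖ ^ 2 = -(β * (‖a‖ ^ 2 - ‖b‖ ^ 2)) by ring,
          abs_neg, abs_mul, abs_of_nonneg hβ]
    _ ≤ β * (η * (R + R)) := by
        gcongr
        exact (abs_sq_norm_sub_sq_norm_le _ _).trans
          (mul_le_mul hab (add_le_add ha hb) (by positivity) hη)
    _ = 2 * β * R * η * 1 := by ring
    _ ≤ 2 * β * R * η * (Real.exp (β * R ^ 2) * Real.exp (-β * ‖a‖ ^ 2)) := by gcongr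
    _ = 2 * β * R * η * Real.exp (β * R ^ 2) * Real.exp (-β * ‖a‖ ^ 2) := by ring

noncomputable def gibbsMeanLipConst (β R : ℝ) : ℝ :=
  4 * β * R ^ 2 * Real.exp (β * R ^ 2) + 1

lemma gibbsMeanLipConst_nonneg {β : ℝ} (hβ : 0 ≤ β) (R : ℝ) : 0 ≤ gibbsMeanLipConst β R := by
  unfold gibbsMeanLipConst
  positivity

section GibbsMean

variable {ι E : Type*} [Fintype ι] [NormedAddCommGroup E] [NormedSpace ℝ E]

lemma norm_sum_smul_le_of_sum_eq_one {w : ι → ℝ} {f : ι → E} {R : ℝ} (hw₀ : ∀ μ, 0 ≤ w μ)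
    (hw₁ : ∑ μ, w μ = 1) (hf : ∀ μ, ‖f μ‖ ≤ R) : ‖∑ μ, w μ • f μ‖ ≤ R :=
  mem_closedBall_zero_iff.1 <| (convex_closedBall (0 : E) R).sum_mem (fun μ _ => hw₀ μ) hw₁
    fun μ _ => mem_closedBall_zero_iff.2 (hf μ)

noncomputable def gibbsMean (β : ℝ) (a : ι → E) : E :=
  ∑ μ, (Real.exp (-β * ‖a μ‖ ^ 2) / ∑ ν, Real.exp (-β * ‖a ν‖ ^ 2)) • a μ

variable [Nonempty ι]

lemma norm_gibbsMean_le {β R : ℝ} {a : ι → E} (ha : ∀ μ, ‖a μ‖ ≤ R) :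
    ‖gibbsMean β a‖ ≤ R :=
  norm_sum_smul_le_of_sum_eq_one (exp_div_sum_exp_nonneg _) (sum_exp_div_sum_exp _) ha

lemma norm_gibbsMean_sub_le {β R η : ℝ} (hβ : 0 ≤ β) {a b : ι → E} (ha : ∀ μ, ‖a μ‖ ≤ R)
    (hb : ∀ μ, ‖b μ‖ ≤ R) (hab : ∀ μ, ‖a μ - b μ‖ ≤ η) :
    ‖gibbsMean β a - gibbsMean β b‖ ≤ gibbsMeanLipConst β R * η := by
  set w : ι → ℝ := fun μ => Real.exp (-β * ‖a μ‖ ^ 2)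
  set w' : ι → ℝ := fun μ => Real.exp (-β * ‖b μ‖ ^ 2)
  set ε := 2 * β * R * η * Real.exp (β * R ^ 2)
  have hR : 0 ≤ R := (norm_nonneg _).trans (ha (Classical.arbitrary ι))
  have hrel : ∀ μ, |w μ - w' μ| ≤ ε * w μ := fun μ =>
    abs_exp_neg_sq_norm_sub_le hβ (ha μ) (hb μ) (hab μ)
  have hweights := sum_abs_div_sum_sub_div_sum_le (fun μ => Real.exp_pos _)
    (fun μ => Real.exp_pos _) hrel
  have hsplit : gibbsMean β a - gibbsMean β b =
      ∑ μ, (w μ / ∑ ν, w ν - w' μ / ∑ ν, w' ν) • a μ + ∑ μ, (w' μ / ∑ ν, w' ν) • (a μ - b μ) := by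
    simp only [gibbsMean, w, w', ← sum_add_distrib, ← sum_sub_distrib]
    congr 1 with μ
    module
  calc ‖gibbsMean β a - gibbsMean β b‖
      ≤ ∑ μ, |w μ / ∑ ν, w ν - w' μ / ∑ ν, w' ν| * R + η := by
        rw [hsplit]
        refine (norm_add_le _ _).trans (add_le_add ?_ ?_)
        · refine (norm_sum_le _ _).trans (sum_le_sum fun μ _ => ?_)
          rw [norm_smul, Real.norm_eq_abs]
          exact mul_le_mul_of_nonneg_left (ha μ) (abs_nonneg _)
        · exact norm_sum_smul_le_of_sum_eq_one (exp_div_sum_exp_nonneg _)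
            (sum_exp_div_sum_exp _) hab
    _ ≤ 2 * ε * R + η := by
        rw [← sum_mul]
        gcongr
    _ = gibbsMeanLipConst β R * η := by rw [gibbsMeanLipConst]; ring

lemma norm_gibbsStep_sub_le {β r R η : ℝ} (hβ : 0 ≤ β) (hr : 0 ≤ r) {ρ ρ' : ι → E} {y y' : E}
    (hR : ∀ μ, ‖ρ μ - y‖ ≤ R) (hR' : ∀ μ, ‖ρ' μ - y'‖ ≤ R) (hη : ∀ μ, ‖ρ μ - ρ' μ‖ ≤ η) :
    ‖(y + r • gibbsMean β (fun μ => ρ μ - y)) - (y' + r • gibbsMean β (fun μ => ρ' μ - y'))‖ ≤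
      (1 + r * gibbsMeanLipConst β R) * ‖y - y'‖ + r * gibbsMeanLipConst β R * η := by
  have hdiff : ∀ μ, ‖(ρ μ - y) - (ρ' μ - y')‖ ≤ η + ‖y - y'‖ := fun μ => by
    rw [sub_sub_sub_comm]
    exact (norm_sub_le _ _).trans (add_le_add (hη μ) le_rfl)
  have hmean := norm_gibbsMean_sub_le hβ hR hR' hdiff
  calc ‖(y + r • gibbsMean β (fun μ => ρ μ - y)) - (y' + r • gibbsMean β (fun μ => ρ' μ - y'))‖
      = ‖(y - y') + r • (gibbsMean β (fun μ => ρ μ - y) - gibbsMean β (fun μ => ρ' μ - y'))‖ := by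
        rw [smul_sub]
        abel_nf
    _ ≤ ‖y - y'‖ + r * (gibbsMeanLipConst β R * (η + ‖y - y'‖)) := by
        refine (norm_add_le _ _).trans (add_le_add le_rfl ?_)
        rw [norm_smul, Real.norm_of_nonneg hr]
        exact mul_le_mul_of_nonneg_left hmean hr
    _ = (1 + r * gibbsMeanLipConst β R) * ‖y - y'‖ + r * gibbsMeanLipConst β R * η := by ring

end GibbsMean

section AMIteration

variable {d k : ℕ} {β r B : ℝ} {ρ : Fin k → EuclideanSpace ℝ (Fin d)}
  {x : EuclideanSpace ℝ (Fin d)}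

lemma amIter_succ (t : ℕ) :
    amIter β r ρ x (t + 1) = amIter β r ρ x t + r • gibbsMean β (fun μ => ρ μ - amIter β r ρ x t) :=
  rfl

variable [NeZero k]

lemma norm_amIter_le (hr : 0 ≤ r) (hx : ‖x‖ ≤ B) (hρ : ∀ μ, ‖ρ μ‖ ≤ B) (t : ℕ) :
    ‖amIter β r ρ x t‖ ≤ (1 + 2 * r) ^ t * B := by
  have hB : 0 ≤ B := (norm_nonneg x).trans hx
  induction t with
  | zero => simpa [amIter] using hx
  | succ t ih =>
    set y := amIter β r ρ x t
    have hmean : ‖gibbsMean β (fun μ => ρ μ - y)‖ ≤ B + ‖y‖ :=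
      norm_gibbsMean_le fun μ => (norm_sub_le _ _).trans (add_le_add (hρ μ) le_rfl)
    have hgrowth : B ≤ (1 + 2 * r) ^ t * B := le_mul_of_one_le_left hB (one_le_pow₀ (by linarith))
    calc ‖amIter β r ρ x (t + 1)‖ ≤ ‖y‖ + r * (B + ‖y‖) := by
          rw [amIter_succ]
          refine (norm_add_le _ _).trans (add_le_add le_rfl ?_)
          rw [norm_smul, Real.norm_of_nonneg hr]
          exact mul_le_mul_of_nonneg_left hmean hr
      _ ≤ (1 + 2 * r) ^ (t + 1) * B := by
          rw [pow_succ]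
          nlinarith

lemma norm_sub_amIter_le (hr : 0 ≤ r) (hx : ‖x‖ ≤ B) (hρ : ∀ μ, ‖ρ μ‖ ≤ B) (t : ℕ) (μ : Fin k) :
    ‖ρ μ - amIter β r ρ x t‖ ≤ B + (1 + 2 * r) ^ t * B :=
  (norm_sub_le _ _).trans (add_le_add (hρ μ) (norm_amIter_le hr hx hρ t))

end AMIteration

theorem stmt_13_general (β B r : ℝ) (k T : ℕ) (hβ : 0 < β) (hk : 1 ≤ k)
    (hr : 0 < r) :
    ∃ C : ℝ, 0 < C ∧ ∀ (d : ℕ) (x : EuclideanSpace ℝ (Fin d))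
      (ρ ρ' : Fin k → EuclideanSpace ℝ (Fin d)),
      ‖x‖ ≤ B → (∀ μ, ‖ρ μ‖ ≤ B) → (∀ μ, ‖ρ' μ‖ ≤ B) →
      ‖amIter β r ρ x T - amIter β r ρ' x T‖ ≤ C * ∑ μ, ‖ρ μ - ρ' μ‖ := by
  have : NeZero k := ⟨by omega⟩
  set c : ℕ → ℝ := fun t => r * gibbsMeanLipConst β (B + (1 + 2 * r) ^ t * B)
  have hc : ∀ t, 0 ≤ c t := fun t => mul_nonneg hr.le (gibbsMeanLipConst_nonneg hβ.le _)
  set S := ∑ t ∈ range T, c t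
  refine ⟨Real.exp (2 * S), Real.exp_pos _, fun d x ρ ρ' hx hρ hρ' => ?_⟩
  set Δ := ∑ μ, ‖ρ μ - ρ' μ‖
  have hΔ₀ : 0 ≤ Δ := sum_nonneg fun _ _ => norm_nonneg _
  have hΔ : ∀ μ, ‖ρ μ - ρ' μ‖ ≤ Δ := fun μ =>
    single_le_sum (f := fun ν => ‖ρ ν - ρ' ν‖) (fun ν _ => norm_nonneg _) (mem_univ μ)
  have hgronwall := discrete_gronwall (n₀ := 0)
    (u := fun t => ‖amIter β r ρ x t - amIter β r ρ' x t‖) (b := fun t => c t * Δ) (norm_nonneg _)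
    (fun t _ => norm_gibbsStep_sub_le hβ.le hr.le (norm_sub_amIter_le hr.le hx hρ t)
      (norm_sub_amIter_le hr.le hx hρ' t) hΔ)
    (fun t _ => hc t) (fun t _ => mul_nonneg (hc t) hΔ₀) (Nat.zero_le T)
  rw [← range_eq_Ico] at hgronwall
  calc ‖amIter β r ρ x T - amIter β r ρ' x T‖ ≤ (0 + ∑ t ∈ range T, c t * Δ) * Real.exp S := by
        convert hgronwall using 3
        simp [amIter]
    _ = S * Real.exp S * Δ := by rw [zero_add, ← sum_mul]; ring
    _ ≤ Real.exp (2 * S) * Δ := by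
        rw [two_mul, Real.exp_add]
        gcongr
        linarith [Real.add_one_le_exp S]

/-- For `β, B > 0`, `k, T ≥ 1` and step ratio `r = dt/τ > 0`, there is a constant
`C > 0`, depending only on `β`, `B`, `k`, `T` and `r`, such that the `T`-step AM iterates
satisfy `‖x_R^T - x_{R'}^T‖ ≤ C ∑_μ ‖ρ_μ - ρ'_μ‖` for all `x` and prototype tuples
`R, R'` in the ball of radius `B`. -/
theorem stmt_13 (β B r : ℝ) (k T : ℕ) (hβ : 0 < β) (hB : 0 < B) (hk : 1 ≤ k)
    (hT : 1 ≤ T) (hr : 0 < r) :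
    ∃ C : ℝ, 0 < C ∧ ∀ (d : ℕ) (x : EuclideanSpace ℝ (Fin d))
      (ρ ρ' : Fin k → EuclideanSpace ℝ (Fin d)),
      ‖x‖ ≤ B → (∀ μ, ‖ρ μ‖ ≤ B) → (∀ μ, ‖ρ' μ‖ ≤ B) →
      ‖amIter β r ρ x T - amIter β r ρ' x T‖ ≤ C * ∑ μ, ‖ρ μ - ρ' μ‖ :=
  stmt_13_general β B r k T hβ hk hr
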